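/- (Tweedie's formula) Let p : ℝⁿ → ℝ be a nonnegative measurable probability density (∫ p = 1) with finite first moment ∫ ‖x‖ p(x) dx < ∞, and let σ > 0. Define the Gaussian-smoothed density p_σ(z) = ∫ (2πσ²)^{−n/2} exp(−‖z − x‖²/(2σ²)) p(x) dx and the posterior mean m(z) = (∫ x (2πσ²)^{−n/2} exp(−‖z − x‖²/(2σ²)) p(x) dx) / p_σ(z). Then p_σ(z) > 0 for every z, p_σ is differentiable on ℝⁿ, and its gradient satisfies σ² ∇p_σ(z) = (∫ x (2πσ²)^{−n/2} exp(−‖z − x‖²/(2σ²)) p(x) dx) − z·p_σ(z); equivalently, m(z) − z = σ² ∇ log p_σ(z), i.e., the minimum mean-squared-error Gaussian denoiser equals z plus σ² times the score of the noisy density. -/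

import Mathlib

/-!
Differentiate `p_σ(z) = ∫ G(z, x) p(x) dx` under the integral sign. The kernel has gradient
`∇_z G(z, x) = σ⁻² G(z, x) (x - z)`, and `G(z, x) ‖x - z‖ ≤ (2πσ²)^{-n/2} σ` uniformly in `z` and
`x` (because `t e^{-t²/(2σ²)} ≤ σ`), so the differentiated integrand is dominated by a constant
multiple of `|p|`. Integrating gives `σ² ∇p_σ(z) = ∫ G(z, x) p(x) (x - z) dx`, which splits into the
posterior moment minus `z p_σ(z)`. Positivity holds since `G > 0` and `p` is not a.e. zero.
-/

open MeasureTheory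
open scoped RealInnerProductSpace

/-- The Gaussian kernel `(2πσ²)^{-n/2} exp(-‖z - x‖²/(2σ²))` on `ℝⁿ`. -/
noncomputable def gaussKer (n : ℕ) (σ : ℝ) (z x : EuclideanSpace ℝ (Fin n)) : ℝ :=
  (2 * Real.pi * σ ^ 2) ^ (-(n : ℝ) / 2) * Real.exp (-‖z - x‖ ^ 2 / (2 * σ ^ 2))

/-- The Gaussian-smoothed density `p_σ(z) = ∫ (2πσ²)^{-n/2} exp(-‖z-x‖²/(2σ²)) p(x) dx`. -/
noncomputable def smoothedDensity (n : ℕ) (σ : ℝ) (p : EuclideanSpace ℝ (Fin n) → ℝ)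
    (z : EuclideanSpace ℝ (Fin n)) : ℝ :=
  ∫ x, gaussKer n σ z x * p x

/-- The unnormalized posterior first moment `∫ x (2πσ²)^{-n/2} exp(-‖z-x‖²/(2σ²)) p(x) dx`. -/
noncomputable def posteriorMoment (n : ℕ) (σ : ℝ) (p : EuclideanSpace ℝ (Fin n) → ℝ)
    (z : EuclideanSpace ℝ (Fin n)) : EuclideanSpace ℝ (Fin n) :=
  ∫ x, (gaussKer n σ z x * p x) • x

section GaussianKernel

variable {n : ℕ} {σ : ℝ}

lemma gaussKer_pos (hσ : 0 < σ) (z x : EuclideanSpace ℝ (Fin n)) : 0 < gaussKer n σ z x :=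
  mul_pos (Real.rpow_pos_of_pos (by positivity) _) (Real.exp_pos _)

lemma gaussKer_nonneg (z x : EuclideanSpace ℝ (Fin n)) : 0 ≤ gaussKer n σ z x :=
  mul_nonneg (Real.rpow_nonneg (by positivity) _) (Real.exp_pos _).le

lemma gaussKer_le (z x : EuclideanSpace ℝ (Fin n)) :
    gaussKer n σ z x ≤ (2 * Real.pi * σ ^ 2) ^ (-(n : ℝ) / 2) := by
  have hexp : Real.exp (-‖z - x‖ ^ 2 / (2 * σ ^ 2)) ≤ 1 :=
    Real.exp_le_one_iff.mpr (div_nonpos_of_nonpos_of_nonneg (by simp) (by positivity))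
  simpa [gaussKer] using
    mul_le_mul_of_nonneg_left hexp (Real.rpow_nonneg (by positivity) (-(n : ℝ) / 2))

lemma mul_exp_neg_sq_div_le (hσ : 0 < σ) (t : ℝ) : t * Real.exp (-t ^ 2 / (2 * σ ^ 2)) ≤ σ := by
  set s := t ^ 2 / (2 * σ ^ 2)
  -- `t ≤ σ (1 + t²/(2σ²))` is `(t - σ)² + σ² ≥ 0`.
  have hlin : t ≤ σ * (s + 1) := by
    have : σ * (s + 1) = (t ^ 2 + 2 * σ ^ 2) / (2 * σ) := by simp only [s]; field_simp
    rw [this, le_div_iff₀ (by positivity)]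
    nlinarith [sq_nonneg (t - σ)]
  calc t * Real.exp (-t ^ 2 / (2 * σ ^ 2)) = t / Real.exp s := by
        rw [neg_div, Real.exp_neg, ← div_eq_mul_inv]
    _ ≤ σ := by
        rw [div_le_iff₀ (Real.exp_pos s)]
        exact hlin.trans (mul_le_mul_of_nonneg_left (Real.add_one_le_exp s) hσ.le)

lemma gaussKer_mul_norm_sub_le (hσ : 0 < σ) (z x : EuclideanSpace ℝ (Fin n)) :
    gaussKer n σ z x * ‖x - z‖ ≤ (2 * Real.pi * σ ^ 2) ^ (-(n : ℝ) / 2) * σ := by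
  rw [gaussKer, norm_sub_rev x z, mul_assoc, mul_comm (Real.exp _)]
  exact mul_le_mul_of_nonneg_left (mul_exp_neg_sq_div_le hσ ‖z - x‖)
    (Real.rpow_nonneg (by positivity) _)

lemma norm_gaussKer_mul_smul_sub_le (hσ : 0 < σ) (z x : EuclideanSpace ℝ (Fin n)) (a : ℝ) :
    ‖(gaussKer n σ z x * a) • (x - z)‖ ≤ (2 * Real.pi * σ ^ 2) ^ (-(n : ℝ) / 2) * σ * ‖a‖ := by
  rw [norm_smul, norm_mul, Real.norm_of_nonneg (gaussKer_nonneg z x), mul_right_comm]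
  exact mul_le_mul_of_nonneg_right (gaussKer_mul_norm_sub_le hσ z x) (norm_nonneg a)

lemma continuous_gaussKer (z : EuclideanSpace ℝ (Fin n)) : Continuous (gaussKer n σ z) := by
  unfold gaussKer
  fun_prop

lemma hasFDerivAt_gaussKer (x z : EuclideanSpace ℝ (Fin n)) :
    HasFDerivAt (fun z' => gaussKer n σ z' x)
      (innerSL ℝ ((σ ^ 2)⁻¹ • gaussKer n σ z x • (x - z))) z := by
  have hexponent : HasFDerivAt (fun z' => -‖z' - x‖ ^ 2 / (2 * σ ^ 2))
      (-(2 * σ ^ 2)⁻¹ • (2 • innerSL ℝ (z - x))) z := by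
    simpa only [neg_div, div_eq_inv_mul, mul_neg, neg_mul, neg_smul, id_eq,
      ContinuousLinearMap.comp_id] using
      ((hasFDerivAt_id z).sub_const x).norm_sq.const_mul (-(2 * σ ^ 2)⁻¹)
  refine (hexponent.exp.const_mul ((2 * Real.pi * σ ^ 2) ^ (-(n : ℝ) / 2))).congr_fderiv ?_
  ext y
  simp only [gaussKer, smul_apply, innerSL_apply_apply, inner_smul_left,
    inner_sub_left, smul_eq_mul, nsmul_eq_mul, RCLike.conj_to_real]
  ring

end GaussianKernel

section Smoothing

variable {n : ℕ} {σ : ℝ} {p : EuclideanSpace ℝ (Fin n) → ℝ}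

lemma integrable_gaussKer_mul (hp : Integrable p) (z : EuclideanSpace ℝ (Fin n)) :
    Integrable (fun x => gaussKer n σ z x * p x) :=
  hp.bdd_mul (continuous_gaussKer z).aestronglyMeasurable <| .of_forall fun x => by
    rw [Real.norm_of_nonneg (gaussKer_nonneg z x)]
    exact gaussKer_le z x

lemma integrable_gaussKer_mul_smul_sub (hσ : 0 < σ) (hp : Integrable p)
    (z : EuclideanSpace ℝ (Fin n)) :
    Integrable (fun x => (gaussKer n σ z x * p x) • (x - z)) :=
  (hp.norm.const_mul _).mono'
    (((continuous_gaussKer z).aestronglyMeasurable.mul hp.1).smul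
      (continuous_id.sub continuous_const).aestronglyMeasurable)
    (.of_forall fun x => norm_gaussKer_mul_smul_sub_le hσ z x (p x))

lemma integral_gaussKer_mul_smul_sub (hσ : 0 < σ) (hp : Integrable p)
    (z : EuclideanSpace ℝ (Fin n)) :
    ∫ x, (gaussKer n σ z x * p x) • (x - z) =
      posteriorMoment n σ p z - smoothedDensity n σ p z • z := by
  have hconst : Integrable (fun x => (gaussKer n σ z x * p x) • z) :=
    (integrable_gaussKer_mul hp z).smul_const z
  have hmoment : Integrable (fun x => (gaussKer n σ z x * p x) • x) := by
    refine ((integrable_gaussKer_mul_smul_sub hσ hp z).add hconst).congr (.of_forall fun x => ?_)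
    simp [smul_sub]
  simp only [smul_sub]
  rw [integral_sub hmoment hconst, integral_smul_const, posteriorMoment, smoothedDensity]

lemma smoothedDensity_pos (hσ : 0 < σ) (hnn : ∀ x, 0 ≤ p x) (hmass : 0 < ∫ x, p x)
    (z : EuclideanSpace ℝ (Fin n)) : 0 < smoothedDensity n σ p z := by
  have hp : Integrable p := .of_integral_ne_zero hmass.ne'
  have hsupp : 0 < volume (Function.support p) :=
    (integral_pos_iff_support_of_nonneg hnn hp).mp hmass
  rw [smoothedDensity, integral_pos_iff_support_of_nonneg
    (fun x => mul_nonneg (gaussKer_nonneg z x) (hnn x)) (integrable_gaussKer_mul hp z)]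
  exact hsupp.trans_le <| measure_mono fun x hx => mul_ne_zero (gaussKer_pos hσ z x).ne' hx

lemma hasGradientAt_smoothedDensity (hσ : 0 < σ) (hp : Integrable p)
    (z : EuclideanSpace ℝ (Fin n)) :
    HasGradientAt (smoothedDensity n σ p)
      ((σ ^ 2)⁻¹ • (posteriorMoment n σ p z - smoothedDensity n σ p z • z)) z := by
  set C := (2 * Real.pi * σ ^ 2) ^ (-(n : ℝ) / 2)
  let v : EuclideanSpace ℝ (Fin n) → EuclideanSpace ℝ (Fin n) → EuclideanSpace ℝ (Fin n) :=
    fun z' x => (σ ^ 2)⁻¹ • (gaussKer n σ z' x * p x) • (x - z')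
  have hderiv : ∀ x z', HasFDerivAt (fun w => gaussKer n σ w x * p x) (innerSL ℝ (v z' x)) z' := by
    intro x z'
    refine ((hasFDerivAt_gaussKer x z').mul_const (p x)).congr_fderiv ?_
    simp only [v, ← map_smul, smul_smul, mul_comm (p x), mul_assoc]
  have hbound : ∀ x z', ‖innerSL ℝ (v z' x)‖ ≤ (σ ^ 2)⁻¹ * (C * σ * ‖p x‖) := fun x z' => by
    rw [innerSL_apply_norm, norm_smul, Real.norm_of_nonneg (by positivity)]
    exact mul_le_mul_of_nonneg_left (norm_gaussKer_mul_smul_sub_le hσ z' x (p x)) (by positivity)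
  have hv : Integrable (v z) := (integrable_gaussKer_mul_smul_sub hσ hp z).fun_smul _
  have hfderiv : HasFDerivAt (smoothedDensity n σ p) (∫ x, innerSL ℝ (v z x)) z :=
    hasFDerivAt_integral_of_dominated_of_fderiv_le Filter.univ_mem
      (.of_forall fun z' => (integrable_gaussKer_mul hp z').aestronglyMeasurable)
      (integrable_gaussKer_mul hp z)
      ((innerSL ℝ).continuous.comp_aestronglyMeasurable hv.aestronglyMeasurable)
      (.of_forall fun x z' _ => hbound x z') ((hp.norm.const_mul _).const_mul _)
      (.of_forall fun x z' _ => hderiv x z')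
  rw [(innerSL ℝ).integral_comp_comm hv, integral_smul,
    integral_gaussKer_mul_smul_sub hσ hp z] at hfderiv
  exact hasGradientAt_iff_hasFDerivAt.mpr hfderiv

end Smoothing

theorem tweedie_formula_general (n : ℕ) (σ : ℝ) (hσ : 0 < σ)
    (p : EuclideanSpace ℝ (Fin n) → ℝ)
    (hnn : ∀ x, 0 ≤ p x)
    (hprob : ∫ x, p x = 1) :
    (∀ z, 0 < smoothedDensity n σ p z) ∧
    ∀ z, ∃ g : EuclideanSpace ℝ (Fin n),
      HasGradientAt (smoothedDensity n σ p) g z ∧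
      σ ^ 2 • g = posteriorMoment n σ p z - smoothedDensity n σ p z • z := by
  have hp : Integrable p := .of_integral_ne_zero (by simp [hprob])
  refine ⟨smoothedDensity_pos hσ hnn (hprob ▸ one_pos), fun z => ⟨_, hasGradientAt_smoothedDensity hσ hp z, ?_⟩⟩
  rw [smul_smul, mul_inv_cancel₀ (by positivity), one_smul]

/-- Tweedie's formula: for a probability density `p` with finite first moment and `σ > 0`,
the smoothed density `p_σ` is everywhere positive and differentiable, with
`σ² ∇p_σ(z) = (∫ x G_σ(z-x) p(x) dx) - z p_σ(z)`; equivalently, the MMSE denoiser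
`m(z) = E[x | z]` satisfies `m(z) - z = σ² ∇ log p_σ(z)`. -/
theorem tweedie_formula (n : ℕ) (σ : ℝ) (hσ : 0 < σ)
    (p : EuclideanSpace ℝ (Fin n) → ℝ)
    (hmeas : Measurable p) (hnn : ∀ x, 0 ≤ p x)
    (hprob : ∫ x, p x = 1)
    (hmom : Integrable (fun x : EuclideanSpace ℝ (Fin n) => ‖x‖ * p x)) :
    (∀ z, 0 < smoothedDensity n σ p z) ∧
    ∀ z, ∃ g : EuclideanSpace ℝ (Fin n),
      HasGradientAt (smoothedDensity n σ p) g z ∧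
      σ ^ 2 • g = posteriorMoment n σ p z - smoothedDensity n σ p z • z :=
  tweedie_formula_general n σ hσ p hnn hprob
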